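/- Let p ≥ 1 be an integer, n = 2p+1, and let q ∈ ℂ be a primitive n-th root of unity. Let a : ZMod n → ℂ have a(i) ≠ 0 for all i. Let K be the diagonal matrix with K_{i,i} = q^i, let E₊ have (i,j) entry a(i) if j = i+2 and 0 otherwise, and let E₋ have (i,j) entry conj(a(j)) if i = j+2 and 0 otherwise. Then every linear subspace W of ℂ^(ZMod n) that is invariant under the three linear maps determined by K, E₊, and E₋ is either the zero subspace or all of ℂ^(ZMod n). -/

import Mathlib

/-!
A subspace invariant under `K` is invariant under every polynomial in `K`. Since `K` is diagonal
with pairwise distinct entries `q ^ i`, a Lagrange interpolation polynomial in `K` cuts any vector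
of the subspace down to a multiple of a single basis vector `e_i`, so a nonzero invariant subspace
contains some `e_k`. The matrix `E₊` sends `e_k` to `a (k - 2) • e_(k-2)`, and `2` is a unit modulo
the odd number `2p + 1`, so repeated shifts by `-2` reach every `e_j`.
-/

open Matrix Polynomial

section Diagonal

variable {ι F : Type*} [Fintype ι] [DecidableEq ι] [Field F]

theorem eval_mul_mem_of_diagonal_mulVec_mem {d : ι → F} {W : Submodule F (ι → F)}
    (hW : ∀ v ∈ W, diagonal d *ᵥ v ∈ W) {v : ι → F} (hv : v ∈ W) (P : F[X]) :
    (fun k => P.eval (d k) * v k) ∈ W := by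
  induction P using Polynomial.induction_on with
  | C c => simpa only [eval_C, Pi.smul_def, smul_eq_mul] using W.smul_mem c hv
  | add P Q hP hQ => simpa only [eval_add, add_mul, Pi.add_def] using W.add_mem hP hQ
  | monomial n c h =>
    convert hW _ h using 1
    ext k
    simp only [mulVec_diagonal, eval_mul, eval_C, eval_pow, eval_X]
    ring

theorem single_mem_of_diagonal_mulVec_mem {d : ι → F} (hd : Function.Injective d)
    {W : Submodule F (ι → F)} (hW : ∀ v ∈ W, diagonal d *ᵥ v ∈ W) {v : ι → F} (hv : v ∈ W)
    {i : ι} (hi : v i ≠ 0) : Pi.single i 1 ∈ W := by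
  have hinj : Set.InjOn d (Finset.univ : Finset ι) := hd.injOn
  have hcut : (fun k => (Lagrange.basis Finset.univ d i).eval (d k) * v k) = v i • Pi.single i 1 := by
    ext k
    rcases eq_or_ne k i with rfl | hki
    · simp [Lagrange.eval_basis_self hinj (Finset.mem_univ k)]
    · simp [Lagrange.eval_basis_of_ne hki.symm (Finset.mem_univ k), hki]
  have hmem := eval_mul_mem_of_diagonal_mulVec_mem hW hv (Lagrange.basis Finset.univ d i)
  rw [hcut] at hmem
  simpa [smul_smul, inv_mul_cancel₀ hi] using W.smul_mem (v i)⁻¹ hmem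

theorem exists_single_mem_of_diagonal_mulVec_mem {d : ι → F} (hd : Function.Injective d)
    {W : Submodule F (ι → F)} (hW : ∀ v ∈ W, diagonal d *ᵥ v ∈ W) (hW0 : W ≠ ⊥) :
    ∃ k, Pi.single k 1 ∈ W := by
  obtain ⟨v, hv, hv0⟩ := (Submodule.ne_bot_iff W).mp hW0
  obtain ⟨k, hk⟩ := Function.ne_iff.mp hv0
  exact ⟨k, single_mem_of_diagonal_mulVec_mem hd hW hv hk⟩

theorem Submodule.eq_top_of_forall_single_mem {W : Submodule F (ι → F)}
    (h : ∀ i, Pi.single i 1 ∈ W) : W = ⊤ := by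
  rw [eq_top_iff, ← (Pi.basisFun F ι).span_eq, Submodule.span_le]
  rintro _ ⟨i, rfl⟩
  simpa using h i

end Diagonal

section Shift

variable {G R : Type*} [AddCommGroup G] [Fintype G] [DecidableEq G]

def weightedShift [Zero R] (a : G → R) (c : G) : Matrix G G R :=
  of fun i j => if j = i + c then a i else 0

theorem weightedShift_mulVec_single [Semiring R] (a : G → R) (c k : G) :
    weightedShift a c *ᵥ Pi.single k 1 = Pi.single (k - c) (a (k - c)) := by
  ext i
  rw [mulVec_single_one, col_apply, weightedShift, of_apply, Pi.single_apply]
  by_cases h : i = k - c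
  · simp [h]
  · rw [if_neg h, if_neg (fun hk => h (eq_sub_of_add_eq hk.symm))]

theorem single_sub_nsmul_mem_of_weightedShift_mulVec_mem [Field R] {a : G → R} (ha : ∀ i, a i ≠ 0)
    {c : G} {W : Submodule R (G → R)} (hW : ∀ v ∈ W, weightedShift a c *ᵥ v ∈ W)
    {k : G} (hk : Pi.single k 1 ∈ W) (m : ℕ) : Pi.single (k - m • c) 1 ∈ W := by
  induction m with
  | zero => simpa using hk
  | succ m ih =>
    have hmem := W.smul_mem (a (k - m • c - c))⁻¹ (hW _ ih)
    rw [weightedShift_mulVec_single, ← Pi.single_smul', smul_eq_mul, inv_mul_cancel₀ (ha _)] at hmem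
    rwa [succ_nsmul, ← sub_sub]

end Shift

theorem ZMod.exists_sub_nsmul_eq {n : ℕ} [NeZero n] {c : ZMod n} (hc : IsUnit c) (k j : ZMod n) :
    ∃ m : ℕ, k - m • c = j := by
  refine ⟨(hc.unit⁻¹ * (k - j) : ZMod n).val, ?_⟩
  rw [nsmul_eq_mul, ZMod.natCast_zmod_val, mul_right_comm, IsUnit.val_inv_mul, one_mul, sub_sub_cancel]

theorem stmt_16_general (p : ℕ) (q : ℂ)
    (hq : IsPrimitiveRoot q (2 * p + 1))
    (a : ZMod (2 * p + 1) → ℂ) (ha0 : ∀ i, a i ≠ 0)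
    (K Eplus : Matrix (ZMod (2 * p + 1)) (ZMod (2 * p + 1)) ℂ)
    (hK : K = Matrix.diagonal fun i => q ^ i.val)
    (hEplus : Eplus = Matrix.of fun i j => if j = i + 2 then a i else 0)
    (W : Submodule ℂ (ZMod (2 * p + 1) → ℂ))
    (hWK : ∀ v ∈ W, K.mulVec v ∈ W)
    (hWplus : ∀ v ∈ W, Eplus.mulVec v ∈ W) :
    W = ⊥ ∨ W = ⊤ := by
  subst hK hEplus
  refine or_iff_not_imp_left.mpr fun hW0 => ?_
  have hdistinct : Function.Injective fun i : ZMod (2 * p + 1) => q ^ i.val :=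
    fun i j h => ZMod.val_injective _ (hq.pow_inj (ZMod.val_lt i) (ZMod.val_lt j) h)
  have htwo : IsUnit (2 : ZMod (2 * p + 1)) := by
    exact_mod_cast (ZMod.isUnit_iff_coprime 2 _).mpr (Nat.coprime_two_left.mpr (odd_two_mul_add_one p))
  obtain ⟨k, hk⟩ := exists_single_mem_of_diagonal_mulVec_mem hdistinct hWK hW0
  refine Submodule.eq_top_of_forall_single_mem fun j => ?_
  obtain ⟨m, rfl⟩ := ZMod.exists_sub_nsmul_eq htwo k j
  exact single_sub_nsmul_mem_of_weightedShift_mulVec_mem ha0 hWplus hk m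

theorem stmt_16 (p : ℕ) (hp : 1 ≤ p) (q : ℂ)
    (hq : IsPrimitiveRoot q (2 * p + 1))
    (a : ZMod (2 * p + 1) → ℂ) (ha0 : ∀ i, a i ≠ 0)
    (K Eplus Eminus : Matrix (ZMod (2 * p + 1)) (ZMod (2 * p + 1)) ℂ)
    (hK : K = Matrix.diagonal fun i => q ^ i.val)
    (hEplus : Eplus = Matrix.of fun i j => if j = i + 2 then a i else 0)
    (hEminus : Eminus = Matrix.of fun i j => if i = j + 2 then star (a j) else 0)
    (W : Submodule ℂ (ZMod (2 * p + 1) → ℂ))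
    (hWK : ∀ v ∈ W, K.mulVec v ∈ W)
    (hWplus : ∀ v ∈ W, Eplus.mulVec v ∈ W)
    (hWminus : ∀ v ∈ W, Eminus.mulVec v ∈ W) :
    W = ⊥ ∨ W = ⊤ :=
  stmt_16_general p q hq a ha0 K Eplus hK hEplus W hWK hWplus
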